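/- Consider the additive two-factor regression f(x₁, x₂) = (1, x₁, x₂)ᵀ on the design region [0,1]² and normal use conditions x_{u1} < x_{u2} < 0. Set λ_c = 1/(1 + 2|x_{u1}|). For each a with 0 ≤ a ≤ 1, the design ξ_a* assigning weights (1 + a|x_{u1}| + (1−a)|x_{u2}|)λ_c to (0,0), (1−a)(|x_{u1}| − |x_{u2}|)λ_c to (0,1), a(|x_{u1}| − |x_{u2}|)λ_c to (1,0), and ((1−a)|x_{u1}| + a|x_{u2}|)λ_c to (1,1) is a valid approximate design which attains f(x_{u1}, x_{u2})ᵀ M(ξ_a*)⁻¹ f(x_{u1}, x_{u2}) = (1 + 2|x_{u1}|)² (for 0 < a < 1 the information matrix is invertible); and every approximate design ξ on [0,1]² with invertible information matrix M(ξ) satisfies f(x_{u1}, x_{u2})ᵀ M(ξ)⁻¹ f(x_{u1}, x_{u2}) ≥ (1 + 2|x_{u1}|)². Hence each ξ_a* is c-optimal for extrapolation at (x_{u1}, x_{u2}). -/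

import Mathlib

/-!
Take `u = (1, -2, 0)` and `c = f(x_{u1}, x_{u2})`. On the design region `f(x) ⬝ u = 1 - 2x₁`
lies in `[-1, 1]`, so `uᵀ M(ξ) u ≤ 1` for every design, while `c ⬝ u = 1 + 2|x_{u1}|`.
Cauchy–Schwarz for the semi-inner product `xᵀ M(ξ) y`, applied to `u` and `M(ξ)⁻¹ c`, gives
`(c ⬝ u)² ≤ (cᵀ M(ξ)⁻¹ c) (uᵀ M(ξ) u)`, hence the lower bound. The designs `ξ_a*` attain it
since `M(ξ_a*) ((1 + 2|x_{u1}|) u) = c`.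
-/

open Matrix

/-- The additive two-factor regression function `f(x₁,x₂) = (1, x₁, x₂)ᵀ`. -/
noncomputable def fAdd (z : ℝ × ℝ) : Fin 3 → ℝ := ![1, z.1, z.2]

/-- The information matrix `M(ξ) = Σᵢ wᵢ f(zᵢ) f(zᵢ)ᵀ` of an approximate design on `[0,1]²`
for the additive two-factor regression `fAdd`, allowing an arbitrary finite support size. -/
noncomputable def infoM {m : ℕ} (z : Fin m → ℝ × ℝ) (w : Fin m → ℝ) :
    Matrix (Fin 3) (Fin 3) ℝ :=
  ∑ i, w i • vecMulVec (fAdd (z i)) (fAdd (z i))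

section Design

variable {ι n : Type*} [Fintype ι] [Fintype n]

theorem dotProduct_sum_smul_vecMulVec_mulVec (F : ι → n → ℝ) (w : ι → ℝ) (x y : n → ℝ) :
    x ⬝ᵥ (∑ k, w k • vecMulVec (F k) (F k)) *ᵥ y = ∑ k, w k * ((F k ⬝ᵥ x) * (F k ⬝ᵥ y)) := by
  simp only [sum_mulVec, smul_mulVec, vecMulVec_mulVec, dotProduct_sum,
    dotProduct_smul, dotProduct_comm x (F _), smul_eq_mul, op_smul_eq_mul]

theorem dotProduct_inv_mulVec_of_mulVec_eq [DecidableEq n] {M : Matrix n n ℝ} {c u : n → ℝ}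
    (hM : IsUnit M.det) (hu : M *ᵥ u = c) : c ⬝ᵥ M⁻¹ *ᵥ c = c ⬝ᵥ u := by
  rw [← hu, mulVec_mulVec, nonsing_inv_mul _ hM, one_mulVec]

theorem sq_dotProduct_le_dotProduct_inv_mulVec [DecidableEq n] (F : ι → n → ℝ) (w : ι → ℝ)
    (c u : n → ℝ) (hw : ∀ k, 0 ≤ w k) (hsum : ∑ k, w k = 1) (hu : ∀ k, |F k ⬝ᵥ u| ≤ 1)
    (hM : IsUnit (∑ k, w k • vecMulVec (F k) (F k)).det) :
    (c ⬝ᵥ u) ^ 2 ≤ c ⬝ᵥ (∑ k, w k • vecMulVec (F k) (F k))⁻¹ *ᵥ c := by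
  set M := ∑ k, w k • vecMulVec (F k) (F k) with hMdef
  set v := M⁻¹ *ᵥ c
  have hMv : M *ᵥ v = c := by
    rw [mulVec_mulVec, mul_nonsing_inv M hM, one_mulVec]
  have huv : c ⬝ᵥ u = ∑ k, w k * ((F k ⬝ᵥ u) * (F k ⬝ᵥ v)) := by
    rw [← dotProduct_sum_smul_vecMulVec_mulVec, ← hMdef, hMv, dotProduct_comm]
  have hvv : c ⬝ᵥ v = ∑ k, w k * ((F k ⬝ᵥ v) * (F k ⬝ᵥ v)) := by
    rw [← dotProduct_sum_smul_vecMulVec_mulVec, ← hMdef, hMv, dotProduct_comm]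
  have huu : ∑ k, w k * ((F k ⬝ᵥ u) * (F k ⬝ᵥ u)) ≤ 1 := by
    rw [← hsum]
    refine Finset.sum_le_sum fun k _ => mul_le_of_le_one_right (hw k) ?_
    rw [← sq, sq_le_one_iff_abs_le_one]
    exact hu k
  calc (c ⬝ᵥ u) ^ 2
      ≤ (∑ k, w k * ((F k ⬝ᵥ u) * (F k ⬝ᵥ u))) * ∑ k, w k * ((F k ⬝ᵥ v) * (F k ⬝ᵥ v)) := by
        rw [huv]
        refine Finset.sum_sq_le_sum_mul_sum_of_sq_le_mul _
          (fun k _ => mul_nonneg (hw k) (mul_self_nonneg _))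
          (fun k _ => mul_nonneg (hw k) (mul_self_nonneg _)) fun k _ => le_of_eq (by ring)
    _ ≤ 1 * ∑ k, w k * ((F k ⬝ᵥ v) * (F k ⬝ᵥ v)) := by
        gcongr
        exact Finset.sum_nonneg fun k _ => mul_nonneg (hw k) (mul_self_nonneg _)
    _ = c ⬝ᵥ v := by rw [one_mul, hvv]

end Design

theorem fAdd_dotProduct (z : ℝ × ℝ) : fAdd z ⬝ᵥ ![1, -2, 0] = 1 - 2 * z.1 := by
  simp only [fAdd, dotProduct, Fin.sum_univ_three, Fin.isValue, cons_val_zero, cons_val_one,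
    cons_val]
  ring

theorem abs_fAdd_dotProduct_le_one {z : ℝ × ℝ} (hz : z.1 ∈ Set.Icc (0 : ℝ) 1) :
    |fAdd z ⬝ᵥ ![1, -2, 0]| ≤ 1 := by
  rw [fAdd_dotProduct, abs_le]
  constructor <;> linarith [hz.1, hz.2]

theorem infoM_vertices (w : Fin 4 → ℝ) :
    infoM ![(0, 0), (0, 1), (1, 0), (1, 1)] w =
      !![w 0 + w 1 + w 2 + w 3, w 2 + w 3, w 1 + w 3;
        w 2 + w 3, w 2 + w 3, w 3;
        w 1 + w 3, w 3, w 1 + w 3] := by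
  ext i j
  fin_cases i <;> fin_cases j <;>
    simp [infoM, Matrix.sum_apply, fAdd, Fin.sum_univ_four]

/-- Cauchy–Binet: any three of the four vertices give a determinant `±1`. -/
theorem det_infoM_vertices (w : Fin 4 → ℝ) :
    (infoM ![(0, 0), (0, 1), (1, 0), (1, 1)] w).det =
      w 0 * w 1 * w 2 + w 0 * w 1 * w 3 + w 0 * w 2 * w 3 + w 1 * w 2 * w 3 := by
  rw [infoM_vertices, det_fin_three]
  simp only [Fin.isValue, of_apply, cons_val', cons_val_zero, cons_val_fin_one, cons_val_one,
    cons_val]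
  ring

theorem isUnit_det_infoM_vertices {w : Fin 4 → ℝ} (hw : ∀ i, 0 < w i) :
    IsUnit (infoM ![(0, 0), (0, 1), (1, 0), (1, 1)] w).det := by
  rw [det_infoM_vertices]
  have h₀ := hw 0
  have h₁ := hw 1
  have h₂ := hw 2
  have h₃ := hw 3
  exact (by positivity : (0 : ℝ) < _).ne'.isUnit

theorem infoM_vertices_mulVec (w : Fin 4 → ℝ) :
    infoM ![(0, 0), (0, 1), (1, 0), (1, 1)] w *ᵥ ![1, -2, 0] =
      ![w 0 + w 1 - w 2 - w 3, -(w 2 + w 3), w 1 - w 3] := by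
  rw [infoM_vertices]
  ext i
  fin_cases i <;>
    simp only [mulVec, dotProduct, Fin.sum_univ_three, of_apply, cons_val', cons_val_fin_one,
      Fin.zero_eta, Fin.mk_one, Fin.reduceFinMk, Fin.isValue, cons_val_zero, cons_val_one,
      cons_val] <;>
    ring

/-- The weights of `ξ_a*`, with `A₁ = |x_{u1}|` and `A₂ = |x_{u2}|`. -/
noncomputable def optWeights (A₁ A₂ a : ℝ) : Fin 4 → ℝ :=
  ![(1 + a * A₁ + (1 - a) * A₂) / (1 + 2 * A₁),
    (1 - a) * (A₁ - A₂) / (1 + 2 * A₁),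
    a * (A₁ - A₂) / (1 + 2 * A₁),
    ((1 - a) * A₁ + a * A₂) / (1 + 2 * A₁)]

section OptWeights

variable {A₁ A₂ a : ℝ}

theorem optWeights_nonneg (h₂ : 0 ≤ A₂) (h₁₂ : A₂ ≤ A₁) (ha : a ∈ Set.Icc (0 : ℝ) 1)
    (i : Fin 4) :
    0 ≤ optWeights A₁ A₂ a i := by
  obtain ⟨ha₀, ha₁⟩ := ha
  have hD : 0 < 1 + 2 * A₁ := by linarith
  fin_cases i <;>
    simp only [optWeights, Fin.zero_eta, Fin.mk_one, Fin.reduceFinMk, Fin.isValue,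
      cons_val_zero, cons_val_one, cons_val] <;>
    apply div_nonneg _ hD.le <;>
    nlinarith [mul_nonneg ha₀ h₂, mul_nonneg (sub_nonneg.2 ha₁) h₂,
      mul_nonneg ha₀ (sub_nonneg.2 h₁₂), mul_nonneg (sub_nonneg.2 ha₁) (sub_nonneg.2 h₁₂)]

theorem optWeights_pos (h₂ : 0 ≤ A₂) (h₁₂ : A₂ < A₁) (ha : a ∈ Set.Ioo (0 : ℝ) 1)
    (i : Fin 4) :
    0 < optWeights A₁ A₂ a i := by
  obtain ⟨ha₀, ha₁⟩ := ha
  have hD : 0 < 1 + 2 * A₁ := by linarith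
  fin_cases i <;>
    simp only [optWeights, Fin.zero_eta, Fin.mk_one, Fin.reduceFinMk, Fin.isValue,
      cons_val_zero, cons_val_one, cons_val] <;>
    apply div_pos _ hD <;>
    nlinarith [mul_nonneg ha₀.le h₂, mul_nonneg (sub_nonneg.2 ha₁.le) h₂,
      mul_pos ha₀ (sub_pos.2 h₁₂), mul_pos (sub_pos.2 ha₁) (sub_pos.2 h₁₂)]

theorem sum_optWeights (hD : 1 + 2 * A₁ ≠ 0) : ∑ i, optWeights A₁ A₂ a i = 1 := by
  simp only [optWeights, Fin.sum_univ_four, Fin.isValue, cons_val_zero, cons_val_one, cons_val]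
  rw [← add_div, ← add_div, ← add_div, div_eq_one_iff_eq hD]
  ring

theorem infoM_vertices_optWeights_mulVec (hD : 1 + 2 * A₁ ≠ 0) :
    infoM ![(0, 0), (0, 1), (1, 0), (1, 1)] (optWeights A₁ A₂ a) *ᵥ
      ((1 + 2 * A₁) • ![1, -2, 0]) = fAdd (-A₁, -A₂) := by
  rw [mulVec_smul, infoM_vertices_mulVec]
  ext i
  fin_cases i <;>
    simp only [optWeights, fAdd, smul_eq_mul, Pi.smul_apply, Fin.zero_eta, Fin.mk_one,
      Fin.reduceFinMk, Fin.isValue, cons_val_zero, cons_val_one, cons_val] <;>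
    field_simp <;> ring

end OptWeights

/-- For the additive two-factor regression on `[0,1]²` with use conditions
`x_{u1} < x_{u2} < 0` and `λ_c = 1/(1+2|x_{u1}|)`: for every `a ∈ [0,1]` the family of
designs `ξ_a*` on the four vertices with weights
`(1 + a|x_{u1}| + (1−a)|x_{u2}|)λ_c, (1−a)(|x_{u1}|−|x_{u2}|)λ_c, a(|x_{u1}|−|x_{u2}|)λ_c,
((1−a)|x_{u1}| + a|x_{u2}|)λ_c` is a valid approximate design (nonnegative weights summing
to one); for `0 < a < 1` its information matrix is invertible and the `c`-criterion value is
`(1+2|x_{u1}|)²`; and every approximate design with invertible information matrix has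
criterion value at least `(1+2|x_{u1}|)²`.  Hence each `ξ_a*` is `c`-optimal for
extrapolation at `(x_{u1}, x_{u2})`. -/
theorem stmt14 (xu1 xu2 : ℝ) (hxu12 : xu1 < xu2) (hxu2 : xu2 < 0) :
    (∀ a ∈ Set.Icc (0 : ℝ) 1,
      (∀ i, (0 : ℝ) ≤
        ![(1 + a * |xu1| + (1 - a) * |xu2|) / (1 + 2 * |xu1|),
          (1 - a) * (|xu1| - |xu2|) / (1 + 2 * |xu1|),
          a * (|xu1| - |xu2|) / (1 + 2 * |xu1|),
          ((1 - a) * |xu1| + a * |xu2|) / (1 + 2 * |xu1|)] i) ∧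
      ∑ i, ![(1 + a * |xu1| + (1 - a) * |xu2|) / (1 + 2 * |xu1|),
          (1 - a) * (|xu1| - |xu2|) / (1 + 2 * |xu1|),
          a * (|xu1| - |xu2|) / (1 + 2 * |xu1|),
          ((1 - a) * |xu1| + a * |xu2|) / (1 + 2 * |xu1|)] i = 1) ∧
    (∀ a ∈ Set.Ioo (0 : ℝ) 1,
      IsUnit (infoM ![(0, 0), (0, 1), (1, 0), (1, 1)]
        ![(1 + a * |xu1| + (1 - a) * |xu2|) / (1 + 2 * |xu1|),
          (1 - a) * (|xu1| - |xu2|) / (1 + 2 * |xu1|),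
          a * (|xu1| - |xu2|) / (1 + 2 * |xu1|),
          ((1 - a) * |xu1| + a * |xu2|) / (1 + 2 * |xu1|)]).det ∧
      fAdd (xu1, xu2) ⬝ᵥ (infoM ![(0, 0), (0, 1), (1, 0), (1, 1)]
        ![(1 + a * |xu1| + (1 - a) * |xu2|) / (1 + 2 * |xu1|),
          (1 - a) * (|xu1| - |xu2|) / (1 + 2 * |xu1|),
          a * (|xu1| - |xu2|) / (1 + 2 * |xu1|),
          ((1 - a) * |xu1| + a * |xu2|) / (1 + 2 * |xu1|)])⁻¹ *ᵥ fAdd (xu1, xu2) =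
        (1 + 2 * |xu1|) ^ 2) ∧
    ∀ {m : ℕ} (z : Fin m → ℝ × ℝ) (w : Fin m → ℝ),
      (∀ i, z i ∈ Set.Icc (0 : ℝ) 1 ×ˢ Set.Icc (0 : ℝ) 1) → (∀ i, 0 < w i) →
      ∑ i, w i = 1 → IsUnit (infoM z w).det →
      (1 + 2 * |xu1|) ^ 2 ≤ fAdd (xu1, xu2) ⬝ᵥ (infoM z w)⁻¹ *ᵥ fAdd (xu1, xu2) := by
  have hxu1 : xu1 < 0 := hxu12.trans hxu2
  have hA₂ : 0 < |xu2| := abs_pos.2 hxu2.ne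
  have hA₁₂ : |xu2| < |xu1| := by rw [abs_of_neg hxu1, abs_of_neg hxu2]; linarith
  have hD : 1 + 2 * |xu1| ≠ 0 := by positivity
  have hc : fAdd (xu1, xu2) ⬝ᵥ ![1, -2, 0] = 1 + 2 * |xu1| := by
    rw [fAdd_dotProduct, abs_of_neg hxu1]; ring
  refine ⟨fun a ha => ⟨optWeights_nonneg hA₂.le hA₁₂.le ha, sum_optWeights hD⟩,
    fun a ha => ?_, fun z w hz hw hsum hdet => ?_⟩
  · have hdet := isUnit_det_infoM_vertices (optWeights_pos hA₂.le hA₁₂ ha)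
    have hMu : infoM ![(0, 0), (0, 1), (1, 0), (1, 1)] (optWeights |xu1| |xu2| a) *ᵥ
        ((1 + 2 * |xu1|) • ![1, -2, 0]) = fAdd (xu1, xu2) := by
      rw [infoM_vertices_optWeights_mulVec hD, abs_of_neg hxu1, abs_of_neg hxu2, neg_neg, neg_neg]
    refine ⟨hdet, (dotProduct_inv_mulVec_of_mulVec_eq hdet hMu).trans ?_⟩
    rw [dotProduct_smul, hc, smul_eq_mul, sq]
  · calc (1 + 2 * |xu1|) ^ 2 = (fAdd (xu1, xu2) ⬝ᵥ ![1, -2, 0]) ^ 2 := by rw [hc]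
      _ ≤ _ := sq_dotProduct_le_dotProduct_inv_mulVec (fun k => fAdd (z k)) w _ _
          (fun k => (hw k).le) hsum (fun k => abs_fAdd_dotProduct_le_one (hz k).1) hdet
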